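/- For every n ≥ 2, the complex vector space sol_{A_n} = {X ∈ M_n(ℂ) | Xᵀ A_n + A_n X = 0} has dimension ⌈(n−2)/2⌉ + 1 (equivalently ⌊(n+1)/2⌋) over ℂ. -/
import Mathlib

open Matrix

/-- The `n × n` nilpotent upper-shift matrix `A_n`. -/
def shiftMat (n : ℕ) : Matrix (Fin n) (Fin n) ℂ :=
  Matrix.of fun i j => if (j : ℕ) = (i : ℕ) + 1 then 1 else 0

/-- The solution space `{X | Xᵀ A + A X = 0}` as a ℂ-linear subspace of `M_n(ℂ)`. -/
noncomputable def solSpace (n : ℕ) (A : Matrix (Fin n) (Fin n) ℂ) :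
    Submodule ℂ (Matrix (Fin n) (Fin n) ℂ) where
  carrier := {X | Xᵀ * A + A * X = 0}
  add_mem' := by
    intro a b ha hb
    simp only [Set.mem_setOf_eq] at ha hb ⊢
    have key : (a + b)ᵀ * A + A * (a + b) = (aᵀ * A + A * a) + (bᵀ * A + A * b) := by
      rw [Matrix.transpose_add]; noncomm_ring
    rw [key, ha, hb, add_zero]
  zero_mem' := by simp
  smul_mem' := by
    intro c x hx
    simp only [Set.mem_setOf_eq] at hx ⊢
    rw [Matrix.transpose_smul, Matrix.smul_mul, Matrix.mul_smul, ← smul_add, hx, smul_zero]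

namespace Stmt15

/-- Extension of a matrix to a function on `ℕ × ℕ`, zero outside the range. -/
def ext (n : ℕ) (X : Matrix (Fin n) (Fin n) ℂ) (i j : ℕ) : ℂ :=
  if h : i < n ∧ j < n then X ⟨i, h.1⟩ ⟨j, h.2⟩ else 0

lemma ext_apply (n : ℕ) (X : Matrix (Fin n) (Fin n) ℂ) (i j : Fin n) :
    ext n X i j = X i j := by
  unfold ext
  rw [dif_pos ⟨i.isLt, j.isLt⟩]

lemma ext_out (n : ℕ) (X : Matrix (Fin n) (Fin n) ℂ) (i j : ℕ) (h : n ≤ i ∨ n ≤ j) :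
    ext n X i j = 0 := by
  unfold ext
  rw [dif_neg (by omega)]

lemma entry_eq (n : ℕ) (X : Matrix (Fin n) (Fin n) ℂ) (p q : Fin n) :
    (Xᵀ * shiftMat n + shiftMat n * X) p q
      = (if 1 ≤ (q : ℕ) then ext n X ((q : ℕ) - 1) (p : ℕ) else 0)
        + ext n X ((p : ℕ) + 1) (q : ℕ) := by
  have h1 : (Xᵀ * shiftMat n) p q
      = (if 1 ≤ (q : ℕ) then ext n X ((q : ℕ) - 1) (p : ℕ) else 0) := by
    rw [Matrix.mul_apply]
    rcases Nat.lt_or_ge 0 (q : ℕ) with hq | hq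
    · have hq1 : (q : ℕ) - 1 < n := by omega
      rw [Finset.sum_eq_single (⟨(q : ℕ) - 1, hq1⟩ : Fin n)]
      · have hcond : (q : ℕ) = ((⟨(q : ℕ) - 1, hq1⟩ : Fin n) : ℕ) + 1 := by simp; omega
        rw [if_pos (show 1 ≤ (q : ℕ) from hq)]
        unfold ext
        rw [dif_pos ⟨hq1, p.isLt⟩]
        simp only [transpose_apply, shiftMat, Matrix.of_apply, if_pos hcond, mul_one]
      · intro b _ hb
        have : (q : ℕ) ≠ (b : ℕ) + 1 := by
          intro h; apply hb; apply Fin.ext; simp; omega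
        simp [shiftMat, this]
      · intro h; exact absurd (Finset.mem_univ _) h
    · have : ∀ b : Fin n, b ∈ Finset.univ → Xᵀ p b * shiftMat n b q = 0 := by
        intro b _
        have : (q : ℕ) ≠ (b : ℕ) + 1 := by omega
        simp [shiftMat, this]
      rw [Finset.sum_eq_zero this, if_neg (by omega)]
  have h2 : (shiftMat n * X) p q = ext n X ((p : ℕ) + 1) (q : ℕ) := by
    rw [Matrix.mul_apply]
    rcases Nat.lt_or_ge ((p : ℕ) + 1) n with hp | hp
    · rw [Finset.sum_eq_single (⟨(p : ℕ) + 1, hp⟩ : Fin n)]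
      · unfold ext
        rw [dif_pos ⟨hp, q.isLt⟩]
        simp [shiftMat]
      · intro b _ hb
        have : (b : ℕ) ≠ (p : ℕ) + 1 := by
          intro h; apply hb; apply Fin.ext; simp [h]
        simp [shiftMat, this]
      · intro h; exact absurd (Finset.mem_univ _) h
    · have : ∀ b : Fin n, b ∈ Finset.univ → shiftMat n p b * X b q = 0 := by
        intro b _
        have : (b : ℕ) ≠ (p : ℕ) + 1 := by omega
        simp [shiftMat, this]
      rw [Finset.sum_eq_zero this, (ext_out n X _ _ (Or.inl hp)).symm]
  rw [Matrix.add_apply, h1, h2]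

variable {n : ℕ} {X : Matrix (Fin n) (Fin n) ℂ}

lemma solR (hX : X ∈ solSpace n (shiftMat n)) (i j : ℕ) (hj : j + 1 < n) :
    ext n X j i + ext n X (i + 1) (j + 1) = 0 := by
  have hX' : Xᵀ * shiftMat n + shiftMat n * X = 0 := hX
  rcases Nat.lt_or_ge i n with hi | hi
  · have h := congrFun (congrFun hX' ⟨i, hi⟩) ⟨j + 1, hj⟩
    rw [entry_eq] at h
    simp only [Matrix.zero_apply, Fin.val_mk] at h
    rw [if_pos (by omega), Nat.add_sub_cancel] at h
    exact h
  · rw [ext_out n X j i (Or.inr hi), ext_out n X (i+1) (j+1) (Or.inl (by omega)), add_zero]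

lemma solC0 (hX : X ∈ solSpace n (shiftMat n)) (r : ℕ) (hr : 1 ≤ r) :
    ext n X r 0 = 0 := by
  rcases Nat.lt_or_ge r n with hrn | hrn
  · have hX' : Xᵀ * shiftMat n + shiftMat n * X = 0 := hX
    have h := congrFun (congrFun hX' ⟨r - 1, by omega⟩) ⟨0, by omega⟩
    rw [entry_eq] at h
    simp only [Matrix.zero_apply, Fin.val_mk] at h
    rw [if_neg (by omega), zero_add, show r - 1 + 1 = r by omega] at h
    exact h
  · exact ext_out n X r 0 (Or.inl hrn)

lemma mem_of (hR : ∀ i j : ℕ, j + 1 < n → ext n X j i + ext n X (i + 1) (j + 1) = 0)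
    (hC : ∀ r : ℕ, 1 ≤ r → ext n X r 0 = 0) : X ∈ solSpace n (shiftMat n) := by
  show Xᵀ * shiftMat n + shiftMat n * X = 0
  ext p q
  rw [entry_eq, Matrix.zero_apply]
  rcases Nat.eq_zero_or_pos (q : ℕ) with hq | hq
  · rw [if_neg (by omega), zero_add, hq]
    exact hC _ (by omega)
  · rw [if_pos (by omega)]
    have := hR (p : ℕ) ((q : ℕ) - 1) (by omega)
    rw [show (q : ℕ) - 1 + 1 = (q : ℕ) by omega] at this
    exact this

/-- Forced zeros from column 0, propagating forward. -/
lemma Z1 (hX : X ∈ solSpace n (shiftMat n)) :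
    ∀ s i j : ℕ, i + j ≤ s → i < n → j < n →
      ((j % 2 = 0 ∧ j < i) ∨ (i % 2 = 1 ∧ i < j)) → ext n X i j = 0 := by
  intro s
  induction s with
  | zero => intro i j hs hi hj hc; rcases hc with ⟨_, h⟩ | ⟨_, h⟩ <;> omega
  | succ s ih =>
    intro i j hs hi hj hc
    rcases hc with ⟨hje, hji⟩ | ⟨hio, hij⟩
    · rcases Nat.eq_zero_or_pos j with hj0 | hjp
      · rw [hj0]; exact solC0 hX i (by omega)
      · have hrel := solR hX (i - 1) (j - 1) (by omega)
        rw [show i - 1 + 1 = i by omega, show j - 1 + 1 = j by omega] at hrel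
        have h0 : ext n X (j - 1) (i - 1) = 0 :=
          ih (j - 1) (i - 1) (by omega) (by omega) (by omega) (Or.inr ⟨by omega, by omega⟩)
        rw [h0, zero_add] at hrel
        exact hrel
    · have hrel := solR hX (i - 1) (j - 1) (by omega)
      rw [show i - 1 + 1 = i by omega, show j - 1 + 1 = j by omega] at hrel
      have h0 : ext n X (j - 1) (i - 1) = 0 :=
        ih (j - 1) (i - 1) (by omega) (by omega) (by omega) (Or.inl ⟨by omega, by omega⟩)
      rw [h0, zero_add] at hrel
      exact hrel

/-- Forced zeros from column `n-1`, propagating backward. -/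
lemma Z2 (hX : X ∈ solSpace n (shiftMat n)) :
    ∀ s i j : ℕ, 2 * n - (i + j) ≤ s → i < n → j < n →
      ((i % 2 = 0 ∧ i < j ∧ (j - i) % 2 = (n - 1) % 2) ∨
        (j % 2 = 1 ∧ j < i ∧ (i - j) % 2 = (n - 1) % 2)) → ext n X i j = 0 := by
  intro s
  induction s with
  | zero => intro i j hs hi hj hc; omega
  | succ s ih =>
    intro i j hs hi hj hc
    rcases hc with ⟨hie, hij, hpar⟩ | ⟨hjo, hji, hpar⟩
    · by_cases hjtop : j = n - 1
      · have hrel := solR hX (n - 1) i (by omega)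
        rw [show n - 1 + 1 = n by omega] at hrel
        rw [ext_out n X n (i + 1) (Or.inl le_rfl), add_zero] at hrel
        rw [hjtop]; exact hrel
      · have hrel := solR hX j i (by omega)
        have h0 : ext n X (j + 1) (i + 1) = 0 :=
          ih (j + 1) (i + 1) (by omega) (by omega) (by omega)
            (Or.inr ⟨by omega, by omega, by omega⟩)
        rw [h0, add_zero] at hrel
        exact hrel
    · have hitop : i ≠ n - 1 := by
        intro h; omega
      have hrel := solR hX j i (by omega)
      have h0 : ext n X (j + 1) (i + 1) = 0 :=
        ih (j + 1) (i + 1) (by omega) (by omega) (by omega)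
          (Or.inl ⟨by omega, by omega, by omega⟩)
      rw [h0, add_zero] at hrel
      exact hrel

/-- Every entry is determined by the row-0 entries. -/
lemma Drep (hX : X ∈ solSpace n (shiftMat n)) :
    ∀ s i j : ℕ, i + j ≤ s → i < n → j < n →
      (i % 2 = 0 ∧ i ≤ j → ext n X i j = (-1 : ℂ) ^ i * ext n X 0 (j - i)) ∧
      (j % 2 = 1 ∧ j ≤ i → ext n X i j = (-1 : ℂ) ^ j * ext n X 0 (i - j)) := by
  intro s
  induction s with
  | zero =>
    intro i j hs hi hj
    constructor
    · rintro ⟨-, -⟩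
      rw [show i = 0 by omega]
      simp
    · rintro ⟨h, -⟩; omega
  | succ s ih =>
    intro i j hs hi hj
    constructor
    · rintro ⟨hie, hij⟩
      rcases Nat.eq_zero_or_pos i with h0 | hp
      · rw [h0]; simp
      · have hrel := solR hX (i - 1) (j - 1) (by omega)
        rw [show i - 1 + 1 = i by omega, show j - 1 + 1 = j by omega] at hrel
        have hprev := (ih (j - 1) (i - 1) (by omega) (by omega) (by omega)).2
          ⟨by omega, by omega⟩
        rw [show j - 1 - (i - 1) = j - i by omega] at hprev
        have hs' : (-1 : ℂ) ^ i = -(-1 : ℂ) ^ (i - 1) := by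
          conv_lhs => rw [show i = (i - 1) + 1 by omega]
          rw [pow_succ]; ring
        rw [hs']
        linear_combination hrel - hprev
    · rintro ⟨hjo, hji⟩
      have hrel := solR hX (i - 1) (j - 1) (by omega)
      rw [show i - 1 + 1 = i by omega, show j - 1 + 1 = j by omega] at hrel
      have hprev := (ih (j - 1) (i - 1) (by omega) (by omega) (by omega)).1
        ⟨by omega, by omega⟩
      rw [show i - 1 - (j - 1) = i - j by omega] at hprev
      have hs' : (-1 : ℂ) ^ j = -(-1 : ℂ) ^ (j - 1) := by
        conv_lhs => rw [show j = (j - 1) + 1 by omega]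
        rw [pow_succ]; ring
      rw [hs']
      linear_combination hrel - hprev

/-- The model solution, as a function of row-0 data `c`. -/
def mdl (c : ℕ → ℂ) (i j : ℕ) : ℂ :=
  if i ≤ j ∧ i % 2 = 0 then (-1 : ℂ) ^ i * c (j - i)
  else if j ≤ i ∧ j % 2 = 1 then (-1 : ℂ) ^ j * c (i - j)
  else 0

lemma mdl_congr {c c' : ℕ → ℂ} {i j : ℕ} (h1 : c (j - i) = c' (j - i))
    (h2 : c (i - j) = c' (i - j)) : mdl c i j = mdl c' i j := by
  unfold mdl
  split_ifs
  · rw [h1]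
  · rw [h2]
  · rfl

lemma repr_eq (hX : X ∈ solSpace n (shiftMat n)) (i j : ℕ) (hi : i < n) (hj : j < n) :
    ext n X i j = mdl (fun b => ext n X 0 b) i j := by
  unfold mdl
  split_ifs with h1 h2
  · exact (Drep hX (i + j) i j le_rfl hi hj).1 ⟨h1.2, h1.1⟩
  · exact (Drep hX (i + j) i j le_rfl hi hj).2 ⟨h2.2, h2.1⟩
  · apply Z1 hX (i + j) i j le_rfl hi hj
    omega

lemma ext_of_mdl (c : ℕ → ℂ) (a b : ℕ) :
    ext n (Matrix.of fun i j : Fin n => mdl c (i : ℕ) (j : ℕ)) a b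
      = if a < n ∧ b < n then mdl c a b else 0 := by
  unfold ext
  split_ifs with h
  · simp [Matrix.of_apply]
  · rfl

/-- The model matrix is a solution whenever `c` is supported on admissible indices. -/
lemma solB (c : ℕ → ℂ) (hc : ∀ b : ℕ, c b ≠ 0 → (b = 0 ∨ b % 2 = n % 2)) :
    (Matrix.of fun i j : Fin n => mdl c (i : ℕ) (j : ℕ)) ∈ solSpace n (shiftMat n) := by
  apply mem_of
  · intro i j hj
    rw [ext_of_mdl, ext_of_mdl]
    rcases Nat.lt_or_ge i n with hi | hi
    · rw [if_pos ⟨by omega, hi⟩]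
      by_cases hb1 : j ≤ i ∧ j % 2 = 0
      · have hT1 : mdl c j i = (-1 : ℂ) ^ j * c (i - j) := by
          unfold mdl; rw [if_pos hb1]
        by_cases hin : i + 1 < n
        · rw [if_pos ⟨hin, by omega⟩]
          have hT2 : mdl c (i + 1) (j + 1)
              = (-1 : ℂ) ^ (j + 1) * c (i + 1 - (j + 1)) := by
            unfold mdl
            rw [if_neg (by omega), if_pos ⟨by omega, by omega⟩]
          rw [hT1, hT2, show i + 1 - (j + 1) = i - j by omega, pow_succ]
          ring
        · rw [if_neg (by omega)]
          have hc0 : c (i - j) = 0 := by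
            by_contra hne
            rcases hc _ hne with h | h <;> omega
          rw [hT1, hc0, mul_zero, add_zero]
      · by_cases hb2 : i ≤ j ∧ i % 2 = 1
        · have hT1 : mdl c j i = (-1 : ℂ) ^ i * c (j - i) := by
            unfold mdl; rw [if_neg (by omega), if_pos hb2]
          rw [if_pos ⟨by omega, by omega⟩]
          have hT2 : mdl c (i + 1) (j + 1)
              = (-1 : ℂ) ^ (i + 1) * c (j + 1 - (i + 1)) := by
            unfold mdl; rw [if_pos ⟨by omega, by omega⟩]
          rw [hT1, hT2, show j + 1 - (i + 1) = j - i by omega, pow_succ]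
          ring
        · have hT1 : mdl c j i = 0 := by
            unfold mdl; rw [if_neg (by omega), if_neg (by omega)]
          have hT2 : mdl c (i + 1) (j + 1) = 0 := by
            unfold mdl; rw [if_neg (by omega), if_neg (by omega)]
          rw [hT1, hT2]
          split_ifs <;> simp
    · rw [if_neg (by omega), if_neg (by omega), add_zero]
  · intro r hr
    rw [ext_of_mdl]
    have : mdl c r 0 = 0 := by
      unfold mdl; rw [if_neg (by omega), if_neg (by omega)]
    rw [this]
    split_ifs <;> rfl

/-- Enumeration of the free parameters. -/
def sig (n k : ℕ) : ℕ := if k = 0 then 0 else 2 * k - n % 2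

def invsig (n b : ℕ) : ℕ := if b = 0 then 0 else (b + n % 2) / 2

lemma sig_facts (hn : 2 ≤ n) (k : ℕ) (hk : k < (n + 1) / 2) :
    sig n k < n ∧ (sig n k = 0 ∨ sig n k % 2 = n % 2) ∧ invsig n (sig n k) = k := by
  simp only [sig, invsig]
  split_ifs <;> omega

lemma sig_invsig (hb : b = 0 ∨ b % 2 = n % 2) (hbn : b < n) :
    sig n (invsig n b) = b := by
  simp only [sig, invsig]
  split_ifs <;> omega

lemma invsig_lt (hn : 2 ≤ n) (hb : b = 0 ∨ b % 2 = n % 2) (hbn : b < n) :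
    invsig n b < (n + 1) / 2 := by
  simp only [invsig]
  split_ifs <;> omega

/-- Row-0 data extended from a parameter vector. -/
noncomputable def cind (n : ℕ) (c : Fin ((n + 1) / 2) → ℂ) (b : ℕ) : ℂ :=
  if h : (b = 0 ∨ b % 2 = n % 2) ∧ invsig n b < (n + 1) / 2 then c ⟨invsig n b, h.2⟩ else 0

lemma cind_supp (c : Fin ((n + 1) / 2) → ℂ) (b : ℕ) (hb : cind n c b ≠ 0) :
    b = 0 ∨ b % 2 = n % 2 := by
  unfold cind at hb
  split_ifs at hb with h
  · exact h.1
  · exact absurd rfl hb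

lemma cind_add (a b : Fin ((n + 1) / 2) → ℂ) (x : ℕ) :
    cind n (a + b) x = cind n a x + cind n b x := by
  unfold cind
  split_ifs <;> simp

lemma cind_smul (r : ℂ) (a : Fin ((n + 1) / 2) → ℂ) (x : ℕ) :
    cind n (r • a) x = r * cind n a x := by
  unfold cind
  split_ifs <;> simp

end Stmt15

/-- For `n ≥ 2`, the complex vector space
`sol_{A_n} = {X | Xᵀ A_n + A_n X = 0}` has dimension `⌈(n-2)/2⌉ + 1 = ⌊(n+1)/2⌋`. -/
theorem stmt_15 (n : ℕ) (hn : 2 ≤ n) :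
    Module.finrank ℂ ↥(solSpace n (shiftMat n)) = (n + 1) / 2 := by
  classical
  open Stmt15 in
  let Φ : (Fin ((n + 1) / 2) → ℂ) →ₗ[ℂ] ↥(solSpace n (shiftMat n)) :=
    { toFun := fun c => ⟨Matrix.of fun i j : Fin n => mdl (cind n c) (i : ℕ) (j : ℕ),
        solB _ (cind_supp c)⟩
      map_add' := by
        intro a b
        apply Subtype.ext
        show (Matrix.of fun i j : Fin n => mdl (cind n (a + b)) (i : ℕ) (j : ℕ)) = _
        apply Matrix.ext
        intro i j
        have hadd : ∀ x, cind n (a + b) x = cind n a x + cind n b x := cind_add a b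
        simp only [Submodule.coe_add, Matrix.of_apply, Matrix.add_apply]
        unfold mdl
        simp only [hadd]
        split_ifs <;> ring
      map_smul' := by
        intro r a
        apply Subtype.ext
        show (Matrix.of fun i j : Fin n => mdl (cind n (r • a)) (i : ℕ) (j : ℕ)) = _
        apply Matrix.ext
        intro i j
        have hsmul : ∀ x, cind n (r • a) x = r * cind n a x := cind_smul r a
        simp only [SetLike.val_smul, Submodule.coe_smul, Matrix.of_apply, Matrix.smul_apply,
          smul_eq_mul, RingHom.id_apply]
        unfold mdl
        simp only [hsmul]
        split_ifs <;> ring }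
  have h0 : ∀ c, Φ c = 0 → c = 0 := by
    intro c hc
    have hm : (Matrix.of fun i j : Fin n => mdl (cind n c) (i : ℕ) (j : ℕ))
        = (0 : Matrix (Fin n) (Fin n) ℂ) := congrArg Subtype.val hc
    funext k
    obtain ⟨hlt, hok, hinv⟩ := sig_facts hn (k : ℕ) k.isLt
    have := congrFun (congrFun hm ⟨0, by omega⟩) ⟨sig n (k : ℕ), hlt⟩
    simp only [Matrix.of_apply, Matrix.zero_apply, Fin.val_mk] at this
    unfold mdl at this
    rw [if_pos ⟨Nat.zero_le _, rfl⟩] at this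
    simp only [pow_zero, one_mul, Nat.sub_zero] at this
    unfold cind at this
    rw [dif_pos ⟨hok, by rw [hinv]; exact k.isLt⟩] at this
    simp only [hinv, Fin.eta] at this
    exact this
  have hinj : Function.Injective Φ := by
    intro a b hab
    have := h0 (a - b) (by rw [map_sub, hab, sub_self])
    exact sub_eq_zero.mp this
  have hsurj : Function.Surjective Φ := by
    rintro ⟨X, hX⟩
    refine ⟨fun k => X ⟨0, by omega⟩ ⟨sig n (k : ℕ), (sig_facts hn _ k.isLt).1⟩, ?_⟩
    apply Subtype.ext
    show (Matrix.of fun i j : Fin n => mdl (cind n _) (i : ℕ) (j : ℕ)) = X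
    set c : Fin ((n + 1) / 2) → ℂ :=
      fun k => X ⟨0, by omega⟩ ⟨sig n (k : ℕ), (sig_facts hn _ k.isLt).1⟩ with hcdef
    have key : ∀ b : ℕ, b < n → cind n c b = ext n X 0 b := by
      intro b hbn
      unfold cind
      split_ifs with hcond
      · obtain ⟨hs, hlt⟩ := hcond
        have hsig : sig n (invsig n b) = b := sig_invsig hs hbn
        rw [hcdef]
        simp only []
        unfold Stmt15.ext
        rw [dif_pos ⟨by omega, hbn⟩]
        congr 1
        exact Fin.ext (by simpa using hsig)
      · by_cases hs : b = 0 ∨ b % 2 = n % 2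
        · exact absurd ⟨hs, invsig_lt hn hs hbn⟩ hcond
        · push_neg at hs
          symm
          apply Z2 hX (2 * n) 0 b (by omega) (by omega) hbn
          left
          refine ⟨by omega, by omega, by omega⟩
    apply Matrix.ext
    intro i j
    have h1 : ext n X (i : ℕ) (j : ℕ) = X i j := ext_apply n X i j
    have h2 : ext n X (i : ℕ) (j : ℕ) = mdl (fun b => ext n X 0 b) (i : ℕ) (j : ℕ) :=
      repr_eq hX _ _ i.isLt j.isLt
    have h3 : mdl (cind n c) (i : ℕ) (j : ℕ) = mdl (fun b => ext n X 0 b) (i : ℕ) (j : ℕ) :=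
      mdl_congr (key _ (by omega)) (key _ (by omega))
    simp only [Matrix.of_apply]
    rw [h3, ← h2, h1]
  have e := LinearEquiv.ofBijective Φ ⟨hinj, hsurj⟩
  rw [← e.finrank_eq, Module.finrank_fin_fun]
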